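/- arXiv:1901.00301 — 4 statements merged into one kernel-verified Lean document; each statement's English description precedes it below -/
import Mathlib

section
/- Let K ≥ 2, let D1 be a probability measure on cost-sensitive examples (x, c) ∈ X × [0,1]^K, let Π be a policy class, and let π* ∈ Π minimize E_{D1}[c(π(x))] over Π. Let a* be a measurable map sending (x, c) to an action with c(a*(x,c)) = min_{a ∈ [K]} c(a), and let D2 be the pushforward of D1 under (x, c) ↦ (x, c̃) where c̃(a) = 1 if a ≠ a*(x,c) and c̃(a) = 0 if a = a*(x,c). Then for every π ∈ Π, E_{D2}[c̃(π(x))] − E_{D2}[c̃(π*(x))] ≥ (E_{D1}[c(π(x))] − E_{D1}[c(π*(x))]) − Δ, where Δ = 2·D1{(x, c) : c(π*(x)) ≥ min_{a ≠ π*(x)} c(a)}; that is, D2 is (1, Δ)-similar to D1 with respect to Π. -/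
open MeasureTheory

lemma meas_eval_aux {X : Type*} [MeasurableSpace X] {K : ℕ}
    {σ : X → Fin K} (hσ : Measurable σ) :
    Measurable fun p : X × (Fin K → ℝ) => p.2 (σ p.1) := by
  have h : (fun p : X × (Fin K → ℝ) => p.2 (σ p.1)) =
      fun p => ∑ b : Fin K, if σ p.1 = b then p.2 b else 0 := by
    funext p
    simp
  rw [h]
  apply Finset.measurable_sum
  intro b _
  exact Measurable.ite ((hσ.comp measurable_fst) (measurableSet_singleton b))
    ((measurable_pi_apply b).comp measurable_snd) measurable_const

/-- Labeling the lowest-cost action. Let `D1` be a distribution over cost-sensitive examples,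
`π* ∈ Pol` a `D1`-optimal policy, `a*` a measurable selection of a lowest-cost action, and let
`D2` be the pushforward of `D1` under `(x, c) ↦ (x, c̃)` where `c̃(a) = 1[a ≠ a*(x,c)]`.
Then `D2` is `(1, Δ)`-similar to `D1` w.r.t. `Pol`, with
`Δ = 2·D1{(x,c) : c(π*(x)) ≥ min_{a ≠ π*(x)} c(a)}`, witnessed by `π*` itself. -/
theorem lowest_cost_label_similar {X : Type*} [MeasurableSpace X] {K : ℕ} (hK : 2 ≤ K)
    (D1 : Measure (X × (Fin K → ℝ))) [IsProbabilityMeasure D1]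
    (hD1c : ∀ᵐ p ∂D1, ∀ a, p.2 a ∈ Set.Icc (0:ℝ) 1)
    (Pol : Set (X → Fin K)) (hPol : ∀ π ∈ Pol, Measurable π)
    (πs : X → Fin K) (hπs : πs ∈ Pol)
    (hmin : ∀ π ∈ Pol, (∫ p, p.2 (πs p.1) ∂D1) ≤ ∫ p, p.2 (π p.1) ∂D1)
    (astar : X × (Fin K → ℝ) → Fin K) (hastar : Measurable astar)
    (hastar_min : ∀ p : X × (Fin K → ℝ), ∀ a, p.2 (astar p) ≤ p.2 a)
    (D2 : Measure (X × (Fin K → ℝ)))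
    (hD2 : D2 = Measure.map
      (fun p : X × (Fin K → ℝ) => (p.1, fun a => if a = astar p then (0:ℝ) else 1)) D1) :
    ∀ π ∈ Pol, (∫ p, p.2 (π p.1) ∂D2) - (∫ p, p.2 (πs p.1) ∂D2) ≥
      ((∫ p, p.2 (π p.1) ∂D1) - (∫ p, p.2 (πs p.1) ∂D1)) -
        2 * (D1 {p : X × (Fin K → ℝ) |
          (⨅ a : {a : Fin K // a ≠ πs p.1}, p.2 (a : Fin K)) ≤ p.2 (πs p.1)}).toReal := by
  intro π hπ
  have hπm := hPol π hπ
  have hπsm := hPol πs hπs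
  haveI : Nontrivial (Fin K) := Fin.nontrivial_iff_two_le.mpr hK
  set B : Set (X × (Fin K → ℝ)) :=
    {p | (⨅ a : {a : Fin K // a ≠ πs p.1}, p.2 (a : Fin K)) ≤ p.2 (πs p.1)} with hB
  -- measurability of B
  have hBeq : B = ⋃ a : Fin K, {p | ¬ (a = πs p.1)} ∩ {p | p.2 a ≤ p.2 (πs p.1)} := by
    ext p
    simp only [hB, Set.mem_setOf_eq, Set.mem_iUnion, Set.mem_inter_iff]
    constructor
    · intro h
      haveI : Nonempty {a : Fin K // a ≠ πs p.1} := by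
        obtain ⟨a, ha⟩ := exists_ne (πs p.1)
        exact ⟨⟨a, ha⟩⟩
      obtain ⟨a, ha⟩ := exists_eq_ciInf_of_finite
        (f := fun a : {a : Fin K // a ≠ πs p.1} => p.2 (a : Fin K))
      exact ⟨a, a.2, by rw [ha]; exact h⟩
    · rintro ⟨a, ha, hle⟩
      exact le_trans (ciInf_le (Finite.bddBelow_range _) ⟨a, ha⟩) hle
  have hBm : MeasurableSet B := by
    rw [hBeq]
    apply MeasurableSet.iUnion
    intro a
    refine ((measurableSet_eq_fun measurable_const
        (hπsm.comp measurable_fst)).compl).inter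
      (measurableSet_le ?_ (meas_eval_aux hπsm))
    exact (measurable_pi_apply a).comp measurable_snd
  -- the pushforward map
  have hmapm : Measurable (fun p : X × (Fin K → ℝ) =>
      (p.1, fun a => if a = astar p then (0:ℝ) else 1)) := by
    refine measurable_fst.prodMk (measurable_pi_lambda _ fun a => ?_)
    exact Measurable.ite (measurableSet_eq_fun measurable_const hastar)
      measurable_const measurable_const
  -- compute D2-integrals
  have hI2 : ∀ σ : X → Fin K, Measurable σ →
      (∫ p, p.2 (σ p.1) ∂D2) = ∫ p, (if σ p.1 = astar p then (0:ℝ) else 1) ∂D1 := by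
    intro σ hσ
    rw [hD2, integral_map hmapm.aemeasurable (meas_eval_aux hσ).aestronglyMeasurable]
  -- integrability
  have hint1 : ∀ σ : X → Fin K, Measurable σ → Integrable (fun p => p.2 (σ p.1)) D1 := by
    intro σ hσ
    refine ⟨(meas_eval_aux hσ).aestronglyMeasurable, ?_⟩
    apply HasFiniteIntegral.of_bounded (C := 1)
    filter_upwards [hD1c] with p hp
    rw [Real.norm_eq_abs, abs_le]
    exact ⟨by linarith [(hp (σ p.1)).1], (hp (σ p.1)).2⟩
  have hint2 : ∀ σ : X → Fin K, Measurable σ →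
      Integrable (fun p => (if σ p.1 = astar p then (0:ℝ) else 1)) D1 := by
    intro σ hσ
    refine ⟨(Measurable.ite (measurableSet_eq_fun (hσ.comp measurable_fst)
      hastar) measurable_const measurable_const).aestronglyMeasurable, ?_⟩
    apply HasFiniteIntegral.of_bounded (C := 1)
    filter_upwards with p
    split_ifs <;> simp
  -- pointwise inequality
  have hpt : (fun p => (p.2 (π p.1) - p.2 (πs p.1)) -
      ((if π p.1 = astar p then (0:ℝ) else 1) - (if πs p.1 = astar p then (0:ℝ) else 1)))
      ≤ᵐ[D1] B.indicator (fun _ => (2:ℝ)) := by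
    filter_upwards [hD1c] with p hp
    by_cases hpB : p ∈ B
    · rw [Set.indicator_of_mem hpB]
      have h1 := (hp (π p.1)).2
      have h2 := (hp (πs p.1)).1
      have h3 := (hp (π p.1)).1
      have h4 := (hp (πs p.1)).2
      split_ifs <;> linarith
    · rw [Set.indicator_of_notMem hpB]
      have hstrict : ∀ a, a ≠ πs p.1 → p.2 (πs p.1) < p.2 a := by
        intro a ha
        by_contra hcon
        push_neg at hcon
        exact hpB (le_trans (ciInf_le
          (f := fun a : {a : Fin K // a ≠ πs p.1} => p.2 (a : Fin K))
          (Finite.bddBelow_range _) ⟨a, ha⟩) hcon)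
      have hA : astar p = πs p.1 := by
        by_contra h
        exact absurd (hastar_min p (πs p.1)) (not_le.mpr (hstrict _ h))
      by_cases hππs : π p.1 = πs p.1
      · simp [hππs, hA]
      · have h1 := (hp (π p.1)).2
        have h2 := (hp (πs p.1)).1
        rw [if_neg (fun h => hππs (h.trans hA)), if_pos hA.symm]
        linarith
  -- integrate
  have hfg : Integrable (fun p => p.2 (π p.1) - p.2 (πs p.1)) D1 :=
    (hint1 π hπm).sub (hint1 πs hπsm)
  have hhk : Integrable (fun p =>
      (if π p.1 = astar p then (0:ℝ) else 1) - (if πs p.1 = astar p then (0:ℝ) else 1)) D1 :=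
    (hint2 π hπm).sub (hint2 πs hπsm)
  have hmono := integral_mono_ae (hfg.sub hhk) ((integrable_const (2:ℝ)).indicator hBm) hpt
  have E1 : ∫ p, ((p.2 (π p.1) - p.2 (πs p.1)) -
      ((if π p.1 = astar p then (0:ℝ) else 1) - (if πs p.1 = astar p then (0:ℝ) else 1))) ∂D1
      = ((∫ p, p.2 (π p.1) ∂D1) - ∫ p, p.2 (πs p.1) ∂D1) -
        ((∫ p, (if π p.1 = astar p then (0:ℝ) else 1) ∂D1) -
          ∫ p, (if πs p.1 = astar p then (0:ℝ) else 1) ∂D1) := by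
    rw [integral_sub hfg hhk, integral_sub (hint1 π hπm) (hint1 πs hπsm),
      integral_sub (hint2 π hπm) (hint2 πs hπsm)]
  have E2 : ∫ p, B.indicator (fun _ => (2:ℝ)) p ∂D1 = 2 * (D1 B).toReal := by
    rw [integral_indicator_const _ hBm]; simp [mul_comm, Measure.real]
  simp only [Pi.sub_apply] at hmono
  rw [E1, E2] at hmono
  rw [hI2 π hπm, hI2 πs hπsm]
  linarith
end

section
/- Let n_s ≥ 1 be a natural number, Δ ∈ (0, 1] a real number, and t_1 ≥ 1 a natural number. If Δ/2 − 2·√(ln(t_1 + 1)/n_s) ≤ −2·√(ln(t_1 + 1)/(n_s + t_1)), then 2·√(ln(t_1 + 1)/n_s) ≥ Δ/2, and consequently t_1 ≥ exp(Δ²·n_s/16) − 1. -/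
lemma sq_mul_le_of_le_sqrt_div {δ L n : ℝ} (hδ : 0 ≤ δ) (hL : 0 ≤ L) (hn : 0 ≤ n)
    (h : δ ≤ √(L / n)) : δ ^ 2 * n ≤ L := by
  have hsq : δ ^ 2 ≤ L / n := (Real.le_sqrt hδ (div_nonneg hL hn)).1 h
  rcases hn.eq_or_lt with rfl | hn
  · simpa using hL
  · exact (le_div_iff₀ hn).1 hsq

theorem ucb_warmstart_first_pull_general (ns : ℕ) (Δ : ℝ) (hΔ0 : 0 < Δ)
    (t1 : ℕ)
    (h : Δ / 2 - 2 * Real.sqrt (Real.log ((t1 : ℝ) + 1) / ns)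
        ≤ -(2 * Real.sqrt (Real.log ((t1 : ℝ) + 1) / ((ns : ℝ) + t1)))) :
    2 * Real.sqrt (Real.log ((t1 : ℝ) + 1) / ns) ≥ Δ / 2 ∧
      (t1 : ℝ) ≥ Real.exp (Δ ^ 2 * ns / 16) - 1 := by
  have hconf : Δ / 2 ≤ 2 * √(Real.log ((t1 : ℝ) + 1) / ns) := by
    linarith [Real.sqrt_nonneg (Real.log ((t1 : ℝ) + 1) / ((ns : ℝ) + t1))]
  refine ⟨hconf, ?_⟩
  have ht1 : (0 : ℝ) < t1 + 1 := by positivity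
  have hlog : Δ ^ 2 * ns / 16 ≤ Real.log ((t1 : ℝ) + 1) := by
    have := sq_mul_le_of_le_sqrt_div (L := Real.log ((t1 : ℝ) + 1))
      (by positivity : 0 ≤ Δ / 4) (Real.log_nonneg (by linarith)) ns.cast_nonneg (by linarith)
    linarith
  linarith [(Real.le_log_iff_exp_le ht1).1 hlog]

/-- Key step of the UCB1-with-warm-start lower bound: if the lower confidence bound of arm 2
is below that of arm 1 after `t₁` plays of arm 1, then `2√(ln(t₁+1)/n_s) ≥ Δ/2`, and hence
`t₁ ≥ exp(Δ²·n_s/16) − 1`. -/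
theorem ucb_warmstart_first_pull (ns : ℕ) (hns : 1 ≤ ns) (Δ : ℝ) (hΔ0 : 0 < Δ) (hΔ1 : Δ ≤ 1)
    (t1 : ℕ) (ht1 : 1 ≤ t1)
    (h : Δ / 2 - 2 * Real.sqrt (Real.log ((t1 : ℝ) + 1) / ns)
        ≤ -(2 * Real.sqrt (Real.log ((t1 : ℝ) + 1) / ((ns : ℝ) + t1)))) :
    2 * Real.sqrt (Real.log ((t1 : ℝ) + 1) / ns) ≥ Δ / 2 ∧
      (t1 : ℝ) ≥ Real.exp (Δ ^ 2 * ns / 16) - 1 :=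
  ucb_warmstart_first_pull_general ns Δ hΔ0 t1 h
end

section
/- Let K, t, ε, n_s, α, L be positive real numbers with ε ≤ 1 and let Δ ≥ 0. Define, for λ ∈ [0,1], V(λ) = 2·√((λ²·K·t/ε + (1−λ)²·n_s)·L) + (λ·K/ε + (1−λ))·L and G(λ) = ((1−λ)·n_s·Δ + 2·V(λ)) / (λ·t + (1−λ)·n_s·α). Then min(G(0), G(1)) ≤ √2 · G(λ) for every λ ∈ [0,1]; in particular, min over λ ∈ {0,1} of G(λ) ≤ √2 times the infimum over λ ∈ [0,1] of G(λ). -/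
/-- The deviation bound `V(λ)` in the warm-start contextual bandit analysis. -/
noncomputable def Vfun (K t ε ns L lam : ℝ) : ℝ :=
  2 * Real.sqrt ((lam ^ 2 * K * t / ε + (1 - lam) ^ 2 * ns) * L) +
    (lam * K / ε + (1 - lam)) * L

/-- The per-round excess-cost bound `G(λ)`. -/
noncomputable def Gfun (K t ε ns α Δ L lam : ℝ) : ℝ :=
  ((1 - lam) * ns * Δ + 2 * Vfun K t ε ns L lam) / (lam * t + (1 - lam) * ns * α)

/-!
`G(λ)` is a ratio `N(λ) / D(λ)` whose denominator is affine in `λ`. The numerator is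
"convex up to `√2`": `(1 - λ) N(0) + λ N(1) ≤ √2 N(λ)`, because the square-root term of `V`
at `λ` is the Euclidean norm of `(λ √(Kt/ε · L), (1 - λ) √(ns L))`, while the endpoints
contribute its ℓ¹ norm, and `‖·‖₁ ≤ √2 ‖·‖₂` in the plane. The mediant inequality then gives
`min (G 0) (G 1) ≤ ((1 - λ) N(0) + λ N(1)) / D(λ) ≤ √2 G(λ)`.
-/

lemma add_le_sqrt_two_mul_sqrt_sq_add_sq (x y : ℝ) :
    x + y ≤ √2 * √(x ^ 2 + y ^ 2) := by
  calc x + y ≤ |x + y| := le_abs_self _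
    _ = √((x + y) ^ 2) := (Real.sqrt_sq_eq_abs _).symm
    _ ≤ √(2 * (x ^ 2 + y ^ 2)) := Real.sqrt_le_sqrt (by nlinarith [sq_nonneg (x - y)])
    _ = √2 * √(x ^ 2 + y ^ 2) := Real.sqrt_mul zero_le_two _

lemma min_div_le_convex_combination_div {a b c d lam : ℝ} (hc : 0 < c) (hd : 0 < d)
    (h0 : 0 ≤ lam) (h1 : lam ≤ 1) :
    min (a / c) (b / d) ≤ ((1 - lam) * a + lam * b) / ((1 - lam) * c + lam * d) := by
  have hc' : min (a / c) (b / d) * c ≤ a := (le_div_iff₀ hc).mp (min_le_left _ _)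
  have hd' : min (a / c) (b / d) * d ≤ b := (le_div_iff₀ hd).mp (min_le_right _ _)
  have hpos : 0 < (1 - lam) * c + lam * d := by
    rcases h0.lt_or_eq with h | rfl
    · nlinarith
    · simpa using hc
  rw [le_div_iff₀ hpos]
  nlinarith [mul_le_mul_of_nonneg_left hc' (sub_nonneg.mpr h1), mul_le_mul_of_nonneg_left hd' h0]

lemma Vfun_zero (K t ε ns L : ℝ) : Vfun K t ε ns L 0 = 2 * √(ns * L) + L := by
  simp [Vfun]

lemma Vfun_one (K t ε ns L : ℝ) : Vfun K t ε ns L 1 = 2 * √(K * t / ε * L) + K / ε * L := by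
  simp [Vfun, mul_div_assoc]

lemma convex_combination_Vfun_zero_one_le {K t ε ns L lam : ℝ} (hK : 0 ≤ K) (ht : 0 ≤ t)
    (hε : 0 ≤ ε) (hns : 0 ≤ ns) (hL : 0 ≤ L) (h0 : 0 ≤ lam) (h1 : lam ≤ 1) :
    (1 - lam) * Vfun K t ε ns L 0 + lam * Vfun K t ε ns L 1 ≤ √2 * Vfun K t ε ns L lam := by
  have hsq : (lam * √(K * t / ε * L)) ^ 2 + ((1 - lam) * √(ns * L)) ^ 2
      = (lam ^ 2 * K * t / ε + (1 - lam) ^ 2 * ns) * L := by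
    rw [mul_pow, mul_pow, Real.sq_sqrt (by positivity), Real.sq_sqrt (by positivity)]
    ring
  have hroot := add_le_sqrt_two_mul_sqrt_sq_add_sq (lam * √(K * t / ε * L)) ((1 - lam) * √(ns * L))
  rw [hsq] at hroot
  have hlin : (lam * K / ε + (1 - lam)) * L ≤ √2 * ((lam * K / ε + (1 - lam)) * L) :=
    le_mul_of_one_le_left (by have := sub_nonneg.mpr h1; positivity)
      (Real.one_le_sqrt.mpr one_le_two)
  rw [Vfun_zero, Vfun_one, Vfun]
  linear_combination 2 * hroot + hlin

theorem min_Gfun_zero_one_le_sqrt_two_mul {K t ε ns α L Δ lam : ℝ} (hK : 0 ≤ K) (ht : 0 < t)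
    (hε : 0 ≤ ε) (hns : 0 < ns) (hα : 0 < α) (hL : 0 ≤ L) (hΔ : 0 ≤ Δ)
    (h0 : 0 ≤ lam) (h1 : lam ≤ 1) :
    min (Gfun K t ε ns α Δ L 0) (Gfun K t ε ns α Δ L 1) ≤ √2 * Gfun K t ε ns α Δ L lam := by
  have hnum : (1 - lam) * (ns * Δ + 2 * Vfun K t ε ns L 0) + lam * (2 * Vfun K t ε ns L 1)
      ≤ √2 * ((1 - lam) * ns * Δ + 2 * Vfun K t ε ns L lam) := by
    have hV := convex_combination_Vfun_zero_one_le hK ht.le hε hns.le hL h0 h1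
    have hΔ' : (1 - lam) * ns * Δ ≤ √2 * ((1 - lam) * ns * Δ) :=
      le_mul_of_one_le_left (by have := sub_nonneg.mpr h1; positivity)
        (Real.one_le_sqrt.mpr one_le_two)
    linarith
  calc min (Gfun K t ε ns α Δ L 0) (Gfun K t ε ns α Δ L 1)
      = min ((ns * Δ + 2 * Vfun K t ε ns L 0) / (ns * α)) (2 * Vfun K t ε ns L 1 / t) := by
        simp [Gfun]
    _ ≤ ((1 - lam) * (ns * Δ + 2 * Vfun K t ε ns L 0) + lam * (2 * Vfun K t ε ns L 1))
          / ((1 - lam) * (ns * α) + lam * t) :=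
        min_div_le_convex_combination_div (by positivity) ht h0 h1
    _ ≤ √2 * ((1 - lam) * ns * Δ + 2 * Vfun K t ε ns L lam)
          / ((1 - lam) * (ns * α) + lam * t) :=
        div_le_div_of_nonneg_right hnum (by positivity)
    _ = √2 * Gfun K t ε ns α Δ L lam := by
        rw [Gfun, mul_div_assoc]
        ring_nf

theorem min_G_zero_one_le_general (K t ε ns α L Δ : ℝ) (hK : 0 < K) (ht : 0 < t) (hε : 0 < ε)
    (hns : 0 < ns) (hα : 0 < α) (hL : 0 < L) (hΔ : 0 ≤ Δ) :
    (∀ lam ∈ Set.Icc (0:ℝ) 1,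
        min (Gfun K t ε ns α Δ L 0) (Gfun K t ε ns α Δ L 1) ≤
          Real.sqrt 2 * Gfun K t ε ns α Δ L lam) ∧
      min (Gfun K t ε ns α Δ L 0) (Gfun K t ε ns α Δ L 1) ≤
        Real.sqrt 2 * ⨅ lam : Set.Icc (0:ℝ) 1, Gfun K t ε ns α Δ L lam := by
  have hpointwise : ∀ lam ∈ Set.Icc (0:ℝ) 1,
      min (Gfun K t ε ns α Δ L 0) (Gfun K t ε ns α Δ L 1) ≤ √2 * Gfun K t ε ns α Δ L lam :=
    fun lam hlam => min_Gfun_zero_one_le_sqrt_two_mul hK.le ht hε.le hns hα hL.le hΔ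
      hlam.1 hlam.2
  refine ⟨hpointwise, ?_⟩
  have : Nonempty (Set.Icc (0:ℝ) 1) := ⟨⟨0, Set.left_mem_Icc.mpr zero_le_one⟩⟩
  rw [Real.mul_iInf_of_nonneg (Real.sqrt_nonneg 2)]
  exact le_ciInf fun lam => hpointwise lam lam.2

/-- Approximate optimality of `Λ = {0,1}`: the better of `G(0)` and `G(1)` is within a
factor `√2` of `G(λ)` for every `λ ∈ [0,1]`, and hence within `√2` of the infimum of `G`
over `[0,1]`. -/
theorem min_G_zero_one_le (K t ε ns α L Δ : ℝ) (hK : 0 < K) (ht : 0 < t) (hε : 0 < ε)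
    (hε1 : ε ≤ 1) (hns : 0 < ns) (hα : 0 < α) (hL : 0 < L) (hΔ : 0 ≤ Δ) :
    (∀ lam ∈ Set.Icc (0:ℝ) 1,
        min (Gfun K t ε ns α Δ L 0) (Gfun K t ε ns α Δ L 1) ≤
          Real.sqrt 2 * Gfun K t ε ns α Δ L lam) ∧
      min (Gfun K t ε ns α Δ L 0) (Gfun K t ε ns α Δ L 1) ≤
        Real.sqrt 2 * ⨅ lam : Set.Icc (0:ℝ) 1, Gfun K t ε ns α Δ L lam :=
  min_G_zero_one_le_general K t ε ns α L Δ hK ht hε hns hα hL hΔ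
end

section
/- Let d ≥ 1, ε ∈ [0, 1/2], and for τ ∈ {−1,+1}^d let D_τ be the probability distribution on [d] × {−1,+1} that picks i uniformly from [d] and then picks the label +1 with probability 1/2 + τ_i·ε and −1 with probability 1/2 − τ_i·ε. If τ, τ' ∈ {−1,+1}^d differ in exactly one coordinate, then the squared Hellinger distance satisfies H²(D_τ, D_{τ'}) ≤ (8/d)·ε². -/
/-!
Both distributions draw the coordinate `i` uniformly, and given `i` the label laws coincide except
at the one coordinate `j` where `τ` and `τ'` differ, where they are `Ber(1/2 + δ)` and
`Ber(1/2 - δ)` with `δ = τⱼ ε`. Hence `H²(D_τ, D_τ') = H²(Ber(1/2 + δ), Ber(1/2 - δ)) / d`, and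
`(√a - √b)² (√a + √b)² = (a - b)²` with `(√a + √b)² ≥ a + b = 1` bounds the latter by `4 ε²`.
-/

open Real

noncomputable section

def hellingerSq {α : Type*} [Fintype α] (P Q : α → ℝ) : ℝ :=
  1 / 2 * ∑ z, (√(P z) - √(Q z)) ^ 2

def labelDist (δ : ℝ) (y : Bool) : ℝ :=
  if y then 1 / 2 + δ else 1 / 2 - δ

/-- The paper's `D_τ`, with the label `+1` encoded as `true`. -/
def assouadDist (d : ℕ) (ε : ℝ) (τ : Fin d → ℝ) (z : Fin d × Bool) : ℝ :=
  1 / d * labelDist (τ z.1 * ε) z.2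

end

@[simp]
lemma hellingerSq_self {α : Type*} [Fintype α] (P : α → ℝ) : hellingerSq P P = 0 := by
  simp [hellingerSq]

lemma hellingerSq_mul_prod {ι κ : Type*} [Fintype ι] [Fintype κ] (w : ι → ℝ)
    (hw : ∀ i, 0 ≤ w i) (p q : ι → κ → ℝ) :
    hellingerSq (fun z : ι × κ => w z.1 * p z.1 z.2) (fun z => w z.1 * q z.1 z.2) =
      ∑ i, w i * hellingerSq (p i) (q i) := by
  have hfiber : ∀ i y,
      (√(w i * p i y) - √(w i * q i y)) ^ 2 = w i * (√(p i y) - √(q i y)) ^ 2 := by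
    intro i y
    rw [sqrt_mul (hw i), sqrt_mul (hw i), ← mul_sub, mul_pow, sq_sqrt (hw i)]
  simp only [hellingerSq, Fintype.sum_prod_type, hfiber, ← Finset.mul_sum]
  rw [Finset.mul_sum]
  simp only [mul_left_comm]

lemma sq_sqrt_sub_sqrt_mul_add_le {a b : ℝ} (ha : 0 ≤ a) (hb : 0 ≤ b) :
    (√a - √b) ^ 2 * (a + b) ≤ (a - b) ^ 2 := by
  have hsum : a + b ≤ (√a + √b) ^ 2 := by
    nlinarith [sq_sqrt ha, sq_sqrt hb, mul_nonneg (sqrt_nonneg a) (sqrt_nonneg b)]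
  calc (√a - √b) ^ 2 * (a + b) ≤ (√a - √b) ^ 2 * (√a + √b) ^ 2 := by gcongr
    _ = (a - b) ^ 2 := by rw [← mul_pow, mul_comm, ← sq_sub_sq, sq_sqrt ha, sq_sqrt hb]

lemma hellingerSq_labelDist_neg_le {δ : ℝ} (hδ : |δ| ≤ 1 / 2) :
    hellingerSq (labelDist δ) (labelDist (-δ)) ≤ 4 * δ ^ 2 := by
  obtain ⟨hlo, hhi⟩ := abs_le.mp hδ
  have key := sq_sqrt_sub_sqrt_mul_add_le (a := 1 / 2 + δ) (b := 1 / 2 - δ) (by linarith)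
    (by linarith)
  simp only [hellingerSq, labelDist, Fintype.sum_bool, if_true, Bool.false_eq_true, if_false,
    sub_neg_eq_add, ← sub_eq_add_neg]
  nlinarith [key]

theorem hellinger_assouad_general (d : ℕ) (ε : ℝ) (hε0 : 0 ≤ ε) (hε : ε ≤ 1 / 2)
    (τ τ' : Fin d → ℝ) (hτ : ∀ i, τ i = 1 ∨ τ i = -1) (hτ' : ∀ i, τ' i = 1 ∨ τ' i = -1)
    (hdiff : ∃ j, τ j ≠ τ' j ∧ ∀ i, i ≠ j → τ i = τ' i) :
    (1 / 2) * ∑ z : Fin d × Bool,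
        (Real.sqrt ((1 / (d : ℝ)) * (if z.2 then 1 / 2 + τ z.1 * ε else 1 / 2 - τ z.1 * ε)) -
          Real.sqrt ((1 / (d : ℝ)) * (if z.2 then 1 / 2 + τ' z.1 * ε else 1 / 2 - τ' z.1 * ε))) ^ 2
      ≤ (8 / (d : ℝ)) * ε ^ 2 := by
  obtain ⟨j, hj, hagree⟩ := hdiff
  have hflip : τ' j = -τ j := by
    rcases hτ j with h | h <;> rcases hτ' j with h' | h' <;> simp_all
  have habs : |τ j| = 1 := by rcases hτ j with h | h <;> simp [h]
  have hδ : |τ j * ε| ≤ 1 / 2 := by rwa [abs_mul, habs, one_mul, abs_of_nonneg hε0]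
  change hellingerSq (assouadDist d ε τ) (assouadDist d ε τ') ≤ _
  unfold assouadDist
  rw [hellingerSq_mul_prod (fun _ => 1 / (d : ℝ)) (fun _ => by positivity)
      (fun i => labelDist (τ i * ε)) (fun i => labelDist (τ' i * ε)),
    Finset.sum_eq_single_of_mem j (Finset.mem_univ j)
      (fun i _ hi => by rw [hagree i hi, hellingerSq_self, mul_zero]),
    hflip, neg_mul]
  calc 1 / (d : ℝ) * hellingerSq (labelDist (τ j * ε)) (labelDist (-(τ j * ε)))
      ≤ 1 / d * (4 * (τ j * ε) ^ 2) := by gcongr; exact hellingerSq_labelDist_neg_le hδ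
    _ = 4 / d * ε ^ 2 := by rw [mul_pow, ← sq_abs (τ j), habs]; ring
    _ ≤ 8 / d * ε ^ 2 := by gcongr; norm_num

/-- Per-pair squared Hellinger distance bound in Assouad's construction: if `τ, τ'` are sign
vectors differing in exactly one coordinate, and `D_τ` is the distribution on `[d] × {±1}`
picking `i` uniformly and then label `+1` with probability `1/2 + τᵢ ε`, then
`H²(D_τ, D_τ') ≤ (8/d) ε²`. -/
theorem hellinger_assouad (d : ℕ) (hd : 1 ≤ d) (ε : ℝ) (hε0 : 0 ≤ ε) (hε : ε ≤ 1 / 2)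
    (τ τ' : Fin d → ℝ) (hτ : ∀ i, τ i = 1 ∨ τ i = -1) (hτ' : ∀ i, τ' i = 1 ∨ τ' i = -1)
    (hdiff : ∃ j, τ j ≠ τ' j ∧ ∀ i, i ≠ j → τ i = τ' i) :
    (1 / 2) * ∑ z : Fin d × Bool,
        (Real.sqrt ((1 / (d : ℝ)) * (if z.2 then 1 / 2 + τ z.1 * ε else 1 / 2 - τ z.1 * ε)) -
          Real.sqrt ((1 / (d : ℝ)) * (if z.2 then 1 / 2 + τ' z.1 * ε else 1 / 2 - τ' z.1 * ε))) ^ 2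
      ≤ (8 / (d : ℝ)) * ε ^ 2 :=
  hellinger_assouad_general d ε hε0 hε τ τ' hτ hτ' hdiff
end
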